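/- arXiv:1301.2483 — 7 statements merged into one kernel-verified Lean document; each statement's English description precedes it below -/
import Mathlib

section
/- For all positive integers m, n and all real x, y, the partial derivatives ∂φ_{m,n}/∂x and ∂φ_{m,n}/∂y are orthogonal with respect to the real inner product on ℂ³ ≅ ℝ⁶, i.e. the real part of the Hermitian inner product ⟨∂φ_{m,n}/∂x, ∂φ_{m,n}/∂y⟩ vanishes. -/
open Real Complex
open scoped ComplexConjugate

/-- The doubly periodic immersion `φ_{m,n} : ℝ² → ℂ³` of Karpukhin's family of
minimal tori of revolution in `S⁵ ⊂ ℂ³`. -/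
noncomputable def phiMN (m n : ℕ) (x y : ℝ) : Fin 3 → ℂ :=
  ![(Real.sqrt (((m : ℝ) + n) / (2 * m + n)) : ℂ) * Complex.exp (Complex.I * m * y) *
      (Real.sin x : ℂ),
    (Real.sqrt (((m : ℝ) + n) / (m + 2 * n)) : ℂ) * Complex.exp (Complex.I * n * y) *
      (Real.cos x : ℂ),
    (Real.sqrt ((n : ℝ) * Real.cos x ^ 2 / (m + 2 * n) +
        (m : ℝ) * Real.sin x ^ 2 / (2 * m + n)) : ℂ) *
      Complex.exp (-(Complex.I * ((m : ℝ) + n) * y))]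

/-! Each coordinate of `φ_{m,n}` has the form `r(x) e^{iky}` with `r` real-valued and `k` real.
Its `x`-derivative `r'(x) e^{iky}` is a real multiple of the phase `e^{iky}`, and its
`y`-derivative `ik r(x) e^{iky}` an imaginary multiple of the same phase, so their Hermitian
product `r'(x) k r(x) |e^{iky}|² i` is purely imaginary, coordinate by coordinate. -/

/-- When `r` is not differentiable at `x`, both sides are the junk value `0`. -/
lemma deriv_ofReal_comp (r : ℝ → ℝ) (x : ℝ) :
    deriv (fun t : ℝ => (r t : ℂ)) x = deriv r x := by
  by_cases hr : DifferentiableAt ℝ r x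
  · exact hr.hasDerivAt.ofReal_comp.deriv
  · have hr' : ¬DifferentiableAt ℝ (fun t : ℝ => (r t : ℂ)) x := fun h =>
      hr (by simpa [Function.comp_def] using reCLM.differentiableAt.comp x h)
    rw [deriv_zero_of_not_differentiableAt hr, deriv_zero_of_not_differentiableAt hr', ofReal_zero]

lemma deriv_ofReal_mul_exp_mul_I (a k y : ℝ) :
    deriv (fun s : ℝ => (a : ℂ) * exp (k * s * I)) y = a * (k * I) * exp (k * y * I) := by
  have hlin : HasDerivAt (fun s : ℝ => (k : ℂ) * s * I) (k * I) y := by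
    simpa using ((hasDerivAt_id y).ofReal_comp.const_mul (k : ℂ)).mul_const I
  rw [(hlin.cexp.const_mul (a : ℂ)).deriv]
  ring

lemma re_conj_ofReal_mul_mul_ofReal_mul_I_mul (a b : ℝ) (E : ℂ) :
    (conj ((a : ℂ) * E) * ((b : ℂ) * I * E)).re = 0 := by
  have h : conj ((a : ℂ) * E) * ((b : ℂ) * I * E) = ((a * b * normSq E : ℝ) : ℂ) * I := by
    rw [map_mul, conj_ofReal]
    push_cast
    rw [normSq_eq_conj_mul_self]
    ring
  rw [h]
  simp

lemma re_conj_deriv_mul_deriv_ofReal_mul_exp (r : ℝ → ℝ) (k x y : ℝ) :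
    (conj (deriv (fun t : ℝ => (r t : ℂ) * exp (k * y * I)) x) *
      deriv (fun s : ℝ => (r x : ℂ) * exp (k * s * I)) y).re = 0 := by
  rw [deriv_mul_const_field, deriv_ofReal_comp, deriv_ofReal_mul_exp_mul_I,
    ← mul_assoc (r x : ℂ), ← ofReal_mul (r x) k]
  exact re_conj_ofReal_mul_mul_ofReal_mul_I_mul _ _ _

/-- The real amplitudes `r_j` of the coordinates `φ_j = r_j(x) e^{i k_j y}` of `φ_{m,n}`. -/
noncomputable def phiMNAmplitude (m n : ℕ) : Fin 3 → ℝ → ℝ :=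
  ![fun x => √(((m : ℝ) + n) / (2 * m + n)) * Real.sin x,
    fun x => √(((m : ℝ) + n) / (m + 2 * n)) * Real.cos x,
    fun x => √((n : ℝ) * Real.cos x ^ 2 / (m + 2 * n) + (m : ℝ) * Real.sin x ^ 2 / (2 * m + n))]

def phiMNFrequency (m n : ℕ) : Fin 3 → ℝ :=
  ![m, n, -((m : ℝ) + n)]

lemma phiMN_apply (m n : ℕ) (x y : ℝ) (j : Fin 3) :
    phiMN m n x y j = (phiMNAmplitude m n j x : ℂ) * exp (phiMNFrequency m n j * y * I) := by
  fin_cases j <;>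
    simp only [phiMN, phiMNAmplitude, phiMNFrequency, Fin.zero_eta, Fin.mk_one, Fin.reduceFinMk,
      Matrix.cons_val, ofReal_mul, ofReal_neg, ofReal_add, ofReal_natCast] <;>
    ring_nf

theorem phiMN_partials_orthogonal_general (m n : ℕ) (x y : ℝ) :
    (∑ j : Fin 3,
        (starRingEnd ℂ) (deriv (fun t : ℝ => phiMN m n t y j) x) *
          deriv (fun s : ℝ => phiMN m n x s j) y).re = 0 := by
  simp_rw [phiMN_apply, re_sum]
  exact Finset.sum_eq_zero fun j _ => re_conj_deriv_mul_deriv_ofReal_mul_exp _ _ x y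

/-- The partial derivatives `∂φ_{m,n}/∂x` and `∂φ_{m,n}/∂y` are orthogonal with
respect to the real inner product on `ℂ³ ≅ ℝ⁶`: the real part of the Hermitian
inner product `⟨∂φ/∂x, ∂φ/∂y⟩ = ∑ conj((∂φ/∂x)_j)·(∂φ/∂y)_j` vanishes. -/
theorem phiMN_partials_orthogonal (m n : ℕ) (hm : 0 < m) (hn : 0 < n) (x y : ℝ) :
    (∑ j : Fin 3,
        (starRingEnd ℂ) (deriv (fun t : ℝ => phiMN m n t y j) x) *
          deriv (fun s : ℝ => phiMN m n x s j) y).re = 0 :=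
  phiMN_partials_orthogonal_general m n x y
end

section
/- For all positive integers m, n and all real x, y, the squared norm of ∂φ_{m,n}/∂x in ℂ³ ≅ ℝ⁶ equals (m+n)·((m+n) − (m−n)cos 2x) / (m² + 4mn + n² − (m² − n²)cos 2x). -/
open Real Complex

/-!
Each coordinate of `φ_{m,n}` is a real amplitude in `x` times a unimodular phase in `y`, so
`‖∂ₓφ‖²` is the sum of the squared `x`-derivatives of the amplitudes. The third amplitude is
`√G` with `G = n cos²x/(m+2n) + m sin²x/(2m+n) > 0`, contributing `G'²/(4G)`. Clearing
denominators, the sum equals `(m+n)(n cos²x + m sin²x) / ((2m+n)(m+2n) G)` once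
`cos²x + sin²x = 1` is used, and rewriting `cos 2x = cos²x - sin²x` turns the claimed right-hand
side into the same quotient.
-/

theorem sq_norm_deriv_ofReal_mul {f : ℝ → ℝ} {f' x : ℝ} (hf : HasDerivAt f f' x)
    {u : ℂ} (hu : ‖u‖ = 1) : ‖deriv (fun t : ℝ => (f t : ℂ) * u) x‖ ^ 2 = f' ^ 2 := by
  rw [(hf.ofReal_comp.mul_const u).deriv, norm_mul, hu, mul_one, norm_real, norm_eq_abs, sq_abs]

theorem mul_sq_add_mul_sq_pos {a b c s : ℝ} (ha : 0 < a) (hb : 0 < b) (hsc : s ^ 2 + c ^ 2 = 1) :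
    0 < a * c ^ 2 + b * s ^ 2 := by
  rcases (sq_nonneg c).eq_or_lt with hc | hc
  · have : 0 < s ^ 2 := by linarith
    positivity
  · positivity

namespace PhiMN

variable {m n : ℝ}

noncomputable def thirdSq (m n t : ℝ) : ℝ :=
  n * Real.cos t ^ 2 / (m + 2 * n) + m * Real.sin t ^ 2 / (2 * m + n)

theorem thirdSq_pos (hm : 0 < m) (hn : 0 < n) (t : ℝ) : 0 < thirdSq m n t := by
  have := mul_sq_add_mul_sq_pos (a := n / (m + 2 * n)) (b := m / (2 * m + n)) (by positivity)
    (by positivity) (Real.sin_sq_add_cos_sq t)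
  simpa only [thirdSq, div_mul_eq_mul_div] using this

theorem hasDerivAt_thirdSq (m n t : ℝ) :
    HasDerivAt (thirdSq m n)
      (2 * Real.sin t * Real.cos t * (m / (2 * m + n) - n / (m + 2 * n))) t := by
  have hc := ((Real.hasDerivAt_cos t).fun_pow 2).const_mul n |>.div_const (m + 2 * n)
  have hs := ((Real.hasDerivAt_sin t).fun_pow 2).const_mul m |>.div_const (2 * m + n)
  exact (hc.add hs).congr_deriv (by ring)

theorem sum_sq_partial_x_eq (hm : 0 < m) (hn : 0 < n) {c s : ℝ} (hsc : s ^ 2 + c ^ 2 = 1) :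
    (m + n) / (2 * m + n) * c ^ 2 + (m + n) / (m + 2 * n) * s ^ 2 +
        (2 * s * c * (m / (2 * m + n) - n / (m + 2 * n))) ^ 2 /
          (4 * (n * c ^ 2 / (m + 2 * n) + m * s ^ 2 / (2 * m + n))) =
      (m + n) * (n * c ^ 2 + m * s ^ 2) / (n * (2 * m + n) * c ^ 2 + m * (m + 2 * n) * s ^ 2) := by
  have hP : 0 < 2 * m + n := by positivity
  have hQ : 0 < m + 2 * n := by positivity
  set P := 2 * m + n with hP_def
  set Q := m + 2 * n with hQ_def
  have hH := mul_sq_add_mul_sq_pos (mul_pos hn hP) (mul_pos hm hQ) hsc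
  field_simp
  rw [hP_def, hQ_def]
  linear_combination 4 * (m + n) * (2 * m + n) * (m + 2 * n) * (n * c ^ 2 + m * s ^ 2) * hsc

theorem ratio_cos_two_mul_eq (x : ℝ) :
    (m + n) * ((m + n) - (m - n) * Real.cos (2 * x)) /
        (m ^ 2 + 4 * m * n + n ^ 2 - (m ^ 2 - n ^ 2) * Real.cos (2 * x)) =
      (m + n) * (n * Real.cos x ^ 2 + m * Real.sin x ^ 2) /
        (n * (2 * m + n) * Real.cos x ^ 2 + m * (m + 2 * n) * Real.sin x ^ 2) := by
  have h := Real.sin_sq_add_cos_sq x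
  rw [Real.cos_two_mul',
    show (m + n) - (m - n) * (Real.cos x ^ 2 - Real.sin x ^ 2) =
      2 * (n * Real.cos x ^ 2 + m * Real.sin x ^ 2) by linear_combination -(m + n) * h,
    show m ^ 2 + 4 * m * n + n ^ 2 - (m ^ 2 - n ^ 2) * (Real.cos x ^ 2 - Real.sin x ^ 2) =
      2 * (n * (2 * m + n) * Real.cos x ^ 2 + m * (m + 2 * n) * Real.sin x ^ 2) by
      linear_combination -(m ^ 2 + 4 * m * n + n ^ 2) * h,
    mul_left_comm, mul_div_mul_left _ _ (two_ne_zero' ℝ)]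

end PhiMN

theorem phiMN_apply_zero (m n : ℕ) (t y : ℝ) :
    phiMN m n t y 0 =
      ((√(((m : ℝ) + n) / (2 * m + n)) * Real.sin t : ℝ) : ℂ) * cexp (↑(m * y) * I) := by
  simp only [phiMN, Matrix.cons_val_zero, ofReal_mul, ofReal_natCast]
  ring_nf

theorem phiMN_apply_one (m n : ℕ) (t y : ℝ) :
    phiMN m n t y 1 =
      ((√(((m : ℝ) + n) / (m + 2 * n)) * Real.cos t : ℝ) : ℂ) * cexp (↑(n * y) * I) := by
  simp only [phiMN, Matrix.cons_val_one, Matrix.cons_val_zero, ofReal_mul, ofReal_natCast]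
  ring_nf

theorem phiMN_apply_two (m n : ℕ) (t y : ℝ) :
    phiMN m n t y 2 = ((√(PhiMN.thirdSq m n t) : ℝ) : ℂ) * cexp (↑(-((m + n) * y)) * I) := by
  simp only [phiMN, PhiMN.thirdSq, Matrix.cons_val, ofReal_neg, ofReal_mul, ofReal_add,
    ofReal_natCast]
  ring_nf

/-- The squared norm of `∂φ_{m,n}/∂x` in `ℂ³ ≅ ℝ⁶` equals
`(m+n)·((m+n) − (m−n)cos 2x) / (m² + 4mn + n² − (m² − n²)cos 2x)`. -/
theorem phiMN_partial_x_sq_norm (m n : ℕ) (hm : 0 < m) (hn : 0 < n) (x y : ℝ) :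
    ∑ j : Fin 3, ‖deriv (fun t : ℝ => phiMN m n t y j) x‖ ^ 2 =
      ((m : ℝ) + n) * (((m : ℝ) + n) - ((m : ℝ) - n) * Real.cos (2 * x)) /
        ((m : ℝ) ^ 2 + 4 * m * n + n ^ 2 - ((m : ℝ) ^ 2 - n ^ 2) * Real.cos (2 * x)) := by
  have hm' : (0 : ℝ) < m := by exact_mod_cast hm
  have hn' : (0 : ℝ) < n := by exact_mod_cast hn
  have hG := PhiMN.thirdSq_pos hm' hn' x
  simp only [Fin.sum_univ_three, phiMN_apply_zero, phiMN_apply_one, phiMN_apply_two]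
  rw [sq_norm_deriv_ofReal_mul ((Real.hasDerivAt_sin x).const_mul _) (norm_exp_ofReal_mul_I _),
    sq_norm_deriv_ofReal_mul ((Real.hasDerivAt_cos x).const_mul _) (norm_exp_ofReal_mul_I _),
    sq_norm_deriv_ofReal_mul ((PhiMN.hasDerivAt_thirdSq m n x).sqrt hG.ne')
      (norm_exp_ofReal_mul_I _),
    PhiMN.ratio_cos_two_mul_eq, ← PhiMN.sum_sq_partial_x_eq hm' hn' (Real.sin_sq_add_cos_sq x)]
  simp only [mul_pow, div_pow, neg_sq, sq_sqrt hG.le]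
  rw [sq_sqrt (by positivity), sq_sqrt (by positivity)]
  norm_num [PhiMN.thirdSq]
end

section
/- Let d, n be positive integers, let e_1, …, e_n ∈ ℝ^d, let u, v, w ∈ ℝⁿ and y, η, ζ ∈ ℝ^d. Define a_j = (v_j + 2πi·u_j·⟨e_j, η⟩)·e^{2πi⟨e_j, y⟩} ∈ ℂ and b_j = (w_j + 2πi·u_j·⟨e_j, ζ⟩)·e^{2πi⟨e_j, y⟩} ∈ ℂ for j = 1, …, n, where ⟨·,·⟩ is the standard inner product on ℝ^d. If Σ_{j=1}^n u_j v_j e_j = 0 and Σ_{j=1}^n u_j w_j e_j = 0 in ℝ^d, then Σ_{j=1}^n Im(conj(a_j)·b_j) = 0. (This says that Mironov's map φ(u, y) = (u_1 e^{2πi⟨e_1,y⟩}, …, u_n e^{2πi⟨e_n,y⟩}) is a Lagrangian immersion: the pullback of the standard symplectic form ω = Σ dx^j ∧ dy^j on ℂⁿ vanishes on tangent vectors to M × ℝ^d, where M is the submanifold cut out by the quadrics Σ_j e_{j i} u_j² = d_i.) -/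
/-!
Multiplying both image vectors by the same unimodular phase `e^{2πi⟨eⱼ,y⟩}` does not change
`Im(conj(aⱼ)·bⱼ)`, which is then `2π uⱼ (vⱼ⟨eⱼ,ζ⟩ - wⱼ⟨eⱼ,η⟩)`. Summing over `j`, each of the two
parts is the inner product of a tangency relation `∑ uⱼvⱼeⱼ = 0`, `∑ uⱼwⱼeⱼ = 0` with `ζ`
resp. `η`, hence vanishes.
-/

open Real Complex Finset ComplexConjugate

theorem Complex.conj_mul_mul_mul_of_norm_eq_one (a b : ℂ) {c : ℂ} (hc : ‖c‖ = 1) :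
    conj (a * c) * (b * c) = conj a * b := by
  calc conj (a * c) * (b * c) = conj a * b * (conj c * c) := by rw [map_mul]; ring
    _ = conj a * b := by rw [conj_mul', hc]; simp

theorem Complex.im_conj_mul_ofReal_add_mul_I (v s w t : ℝ) :
    (conj (v + s * I) * (w + t * I)).im = v * t - s * w := by
  simp [mul_im, add_comm, sub_eq_add_neg]

theorem sum_mul_inner_eq_zero_of_sum_smul_eq_zero {ι E : Type*} [NormedAddCommGroup E]
    [InnerProductSpace ℝ E] {s : Finset ι} {c : ι → ℝ} {e : ι → E}
    (h : ∑ i ∈ s, c i • e i = 0) (x : E) : ∑ i ∈ s, c i * inner ℝ (e i) x = 0 := by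
  simpa [sum_inner, real_inner_smul_left] using congrArg (inner ℝ · x) h

theorem mironov_lagrangian_general (d n : ℕ)
    (e : Fin n → EuclideanSpace ℝ (Fin d)) (u v w : Fin n → ℝ)
    (y η ζ : EuclideanSpace ℝ (Fin d))
    (a b : Fin n → ℂ)
    (ha : ∀ j, a j = ((v j : ℂ) + 2 * Real.pi * Complex.I * u j * (inner ℝ (e j) η : ℝ)) *
      Complex.exp (2 * Real.pi * Complex.I * (inner ℝ (e j) y : ℝ)))
    (hb : ∀ j, b j = ((w j : ℂ) + 2 * Real.pi * Complex.I * u j * (inner ℝ (e j) ζ : ℝ)) *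
      Complex.exp (2 * Real.pi * Complex.I * (inner ℝ (e j) y : ℝ)))
    (hv : ∑ j, (u j * v j) • e j = 0)
    (hw : ∑ j, (u j * w j) • e j = 0) :
    ∑ j, ((starRingEnd ℂ) (a j) * b j).im = 0 := by
  have hterm : ∀ j, (conj (a j) * b j).im =
      2 * π * (u j * v j * inner ℝ (e j) ζ) - 2 * π * (u j * w j * inner ℝ (e j) η) := by
    intro j
    have hphase : ‖exp (2 * π * I * (inner ℝ (e j) y : ℝ))‖ = 1 := by
      rw [← norm_exp_ofReal_mul_I (2 * π * inner ℝ (e j) y)]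
      push_cast
      ring_nf
    have hrect (p : ℝ) (x : EuclideanSpace ℝ (Fin d)) :
        (p : ℂ) + 2 * π * I * u j * (inner ℝ (e j) x : ℝ) =
          p + (2 * π * u j * inner ℝ (e j) x : ℝ) * I := by
      push_cast
      ring
    rw [ha, hb, conj_mul_mul_mul_of_norm_eq_one _ _ hphase, hrect, hrect,
      im_conj_mul_ofReal_add_mul_I]
    ring
  simp only [hterm, sum_sub_distrib, ← mul_sum, sum_mul_inner_eq_zero_of_sum_smul_eq_zero hv,
    sum_mul_inner_eq_zero_of_sum_smul_eq_zero hw, sub_self, mul_zero]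

/-- Mironov's map `φ(u, y) = (u₁ e^{2πi⟨e₁,y⟩}, …, uₙ e^{2πi⟨eₙ,y⟩})` is a Lagrangian
immersion: for tangent vectors `(v, η)` and `(w, ζ)` to `M × ℝ^d` at `(u, y)` (tangency
to `M` being expressed by `∑ uⱼvⱼeⱼ = 0` and `∑ uⱼwⱼeⱼ = 0`), the standard symplectic
form `ω(a, b) = ∑ Im(conj(aⱼ)·bⱼ)` vanishes on the corresponding image vectors
`aⱼ = (vⱼ + 2πi·uⱼ·⟨eⱼ,η⟩)·e^{2πi⟨eⱼ,y⟩}` and `bⱼ = (wⱼ + 2πi·uⱼ·⟨eⱼ,ζ⟩)·e^{2πi⟨eⱼ,y⟩}`. -/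
theorem mironov_lagrangian (d n : ℕ) (hd : 0 < d) (hn : 0 < n)
    (e : Fin n → EuclideanSpace ℝ (Fin d)) (u v w : Fin n → ℝ)
    (y η ζ : EuclideanSpace ℝ (Fin d))
    (a b : Fin n → ℂ)
    (ha : ∀ j, a j = ((v j : ℂ) + 2 * Real.pi * Complex.I * u j * (inner ℝ (e j) η : ℝ)) *
      Complex.exp (2 * Real.pi * Complex.I * (inner ℝ (e j) y : ℝ)))
    (hb : ∀ j, b j = ((w j : ℂ) + 2 * Real.pi * Complex.I * u j * (inner ℝ (e j) ζ : ℝ)) *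
      Complex.exp (2 * Real.pi * Complex.I * (inner ℝ (e j) y : ℝ)))
    (hv : ∑ j, (u j * v j) • e j = 0)
    (hw : ∑ j, (u j * w j) • e j = 0) :
    ∑ j, ((starRingEnd ℂ) (a j) * b j).im = 0 :=
  mironov_lagrangian_general d n e u v w y η ζ a b ha hb hv hw
end

section
/- Let g : [−1, 1] → ℝ be continuously differentiable and odd (g(−t) = −g(t) for all t ∈ [−1, 1]). Then ∫_{−1}^{1} ((1 − t²)·g'(t)² + g(t)²) dt ≥ 3·∫_{−1}^{1} g(t)² dt. -/
/-!
For `t ≠ 0` the flux `F t = (1 - t²) g(t)² / t` satisfies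
`F' = (1 - t²) g'² - 2 g² - (1 - t²) (t g' - g)² / t²`.
Oddness gives `g 0 = 0`, so `F = (1 - t²) · g · dslope g 0` is continuous across `0`, and it vanishes
at `t = ±1` and `t = 0`. Integrating `F' ≤ (1 - t²) g'² - 2 g²` over `[-1, 0]` and `[0, 1]` gives
`∫ (1 - t²) g'² ≥ 2 ∫ g²`, with equality exactly when `t g' = g`, i.e. for `g = c · P₁`.
-/

open Real Set MeasureTheory intervalIntegral Topology

noncomputable def legendreFlux (g : ℝ → ℝ) (t : ℝ) : ℝ := (1 - t ^ 2) * g t ^ 2 / t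

lemma legendreFlux_eq_mul_dslope {g : ℝ → ℝ} (hg0 : g 0 = 0) :
    legendreFlux g = fun t => (1 - t ^ 2) * g t * dslope g 0 t := by
  funext t
  rcases eq_or_ne t 0 with rfl | ht
  · simp [legendreFlux, hg0]
  · rw [legendreFlux, dslope_of_ne _ ht, slope_def_field, hg0]
    ring

lemma continuousOn_legendreFlux {g : ℝ → ℝ} {s : Set ℝ} (hs : s ∈ 𝓝 0) (hg : ContinuousOn g s)
    (hd : DifferentiableAt ℝ g 0) (hg0 : g 0 = 0) : ContinuousOn (legendreFlux g) s := by
  rw [legendreFlux_eq_mul_dslope hg0]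
  exact ((continuousOn_const.sub (continuousOn_pow 2)).mul hg).mul
    ((continuousOn_dslope hs).2 ⟨hg, hd⟩)

lemma hasDerivAt_legendreFlux {g : ℝ → ℝ} {φ t : ℝ} (ht : t ≠ 0) (hg : HasDerivAt g φ t) :
    HasDerivAt (legendreFlux g)
      ((1 - t ^ 2) * φ ^ 2 - 2 * g t ^ 2 - (1 - t ^ 2) * (t * φ - g t) ^ 2 / t ^ 2) t := by
  refine (((((hasDerivAt_id' t).fun_pow 2).const_sub 1).fun_mul (hg.fun_pow 2)).fun_div
    (hasDerivAt_id' t) ht).congr_deriv ?_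
  norm_num
  field_simp
  ring

lemma legendreFlux_sub_le_integral {g φ : ℝ → ℝ} {a b : ℝ} (hab : a ≤ b) (ha : -1 ≤ a)
    (hb : b ≤ 1) (h0 : 0 ∉ Ioo a b) (hF : ContinuousOn (legendreFlux g) (Icc a b))
    (hd : ∀ t ∈ Ioo a b, HasDerivAt g (φ t) t)
    (hint : IntegrableOn (fun t => (1 - t ^ 2) * φ t ^ 2 - 2 * g t ^ 2) (Icc a b)) :
    legendreFlux g b - legendreFlux g a ≤
      ∫ t in a..b, ((1 - t ^ 2) * φ t ^ 2 - 2 * g t ^ 2) := by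
  refine sub_le_integral_of_hasDeriv_right_of_le hab hF
    (fun t ht => (hasDerivAt_legendreFlux (ne_of_mem_of_not_mem ht h0) (hd t ht)).hasDerivWithinAt)
    hint fun t ht => ?_
  have hweight : 0 ≤ 1 - t ^ 2 := by nlinarith [ht.1, ht.2]
  have hdefect := div_nonneg (mul_nonneg hweight (sq_nonneg (t * φ t - g t))) (sq_nonneg t)
  linarith

theorem two_mul_integral_sq_le_integral_weight_mul_sq {g φ : ℝ → ℝ}
    (hg : ContinuousOn g (Icc (-1) 1)) (hφ : ContinuousOn φ (Icc (-1) 1))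
    (hd : ∀ t ∈ Ioo (-1) 1, HasDerivAt g (φ t) t) (hg0 : g 0 = 0) :
    2 * ∫ t in (-1 : ℝ)..1, g t ^ 2 ≤ ∫ t in (-1 : ℝ)..1, (1 - t ^ 2) * φ t ^ 2 := by
  have hf : ContinuousOn (fun t => (1 - t ^ 2) * φ t ^ 2 - 2 * g t ^ 2) (Icc (-1) 1) := by
    fun_prop
  have hF : ContinuousOn (legendreFlux g) (Icc (-1) 1) :=
    continuousOn_legendreFlux (Icc_mem_nhds (by norm_num) (by norm_num)) hg
      (hd 0 (by norm_num)).differentiableAt hg0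
  have hleft := legendreFlux_sub_le_integral (by norm_num) le_rfl (by norm_num)
    (fun h => lt_irrefl _ h.2) (hF.mono (Icc_subset_Icc le_rfl zero_le_one))
    (fun t ht => hd t ⟨ht.1, ht.2.trans one_pos⟩)
    ((hf.mono (Icc_subset_Icc le_rfl zero_le_one)).integrableOn_Icc)
  have hright := legendreFlux_sub_le_integral (by norm_num) (by norm_num) le_rfl
    (fun h => lt_irrefl _ h.1) (hF.mono (Icc_subset_Icc (by norm_num) le_rfl))
    (fun t ht => hd t ⟨(neg_lt_zero.2 one_pos).trans ht.1, ht.2⟩)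
    ((hf.mono (Icc_subset_Icc (by norm_num) le_rfl)).integrableOn_Icc)
  have hsplit := integral_add_adjacent_intervals (μ := volume)
    ((hf.mono (Icc_subset_Icc le_rfl zero_le_one)).intervalIntegrable_of_Icc (by norm_num))
    ((hf.mono (Icc_subset_Icc (by norm_num) le_rfl)).intervalIntegrable_of_Icc zero_le_one)
  have hweighted : IntervalIntegrable (fun t => (1 - t ^ 2) * φ t ^ 2) volume (-1) 1 :=
    ContinuousOn.intervalIntegrable_of_Icc (by norm_num) (by fun_prop)
  have hsq : IntervalIntegrable (fun t => 2 * g t ^ 2) volume (-1) 1 :=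
    ContinuousOn.intervalIntegrable_of_Icc (by norm_num) (by fun_prop)
  rw [integral_sub hweighted hsq, intervalIntegral.integral_const_mul] at hsplit
  -- `legendreFlux g 0 = 0` is the junk value of `/ 0`, consistent with continuity since `g 0 = 0`.
  have hends : legendreFlux g (-1) = 0 ∧ legendreFlux g 0 = 0 ∧ legendreFlux g 1 = 0 := by
    simp [legendreFlux]
  linarith

/-- Rayleigh quotient bound at `k = 1` in the trigonometric Lamé problem: for every
continuously differentiable odd function `g` on `[−1, 1]`,
`∫_{−1}^{1} ((1 − t²)·g'(t)² + g(t)²) dt ≥ 3·∫_{−1}^{1} g(t)² dt`; the infimum `3` is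
attained by the Legendre polynomial `P₁(t) = t`. -/
theorem legendre_odd_rayleigh_bound
    (g : ℝ → ℝ) (hg : ContDiffOn ℝ 1 g (Set.Icc (-1) 1))
    (hodd : ∀ t ∈ Set.Icc (-1 : ℝ) 1, g (-t) = -g t) :
    ∫ t in (-1 : ℝ)..1, ((1 - t ^ 2) * deriv g t ^ 2 + g t ^ 2) ≥
      3 * ∫ t in (-1 : ℝ)..1, g t ^ 2 := by
  have hg0 : g 0 = 0 := by
    have h := hodd 0 (by norm_num)
    rw [neg_zero] at h
    linarith
  set φ := derivWithin g (Icc (-1) 1)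
  have hφ : ContinuousOn φ (Icc (-1) 1) :=
    hg.continuousOn_derivWithin (uniqueDiffOn_Icc (by norm_num)) le_rfl
  have hd : ∀ t ∈ Ioo (-1 : ℝ) 1, HasDerivAt g (φ t) t := fun t ht =>
    ((hg.differentiableOn one_ne_zero t (Ioo_subset_Icc_self ht)).hasDerivWithinAt).hasDerivAt
      (Icc_mem_nhds ht.1 ht.2)
  have hgc : ContinuousOn g (Icc (-1) 1) := hg.continuousOn
  calc ∫ t in (-1 : ℝ)..1, ((1 - t ^ 2) * deriv g t ^ 2 + g t ^ 2)
      = ∫ t in (-1 : ℝ)..1, ((1 - t ^ 2) * φ t ^ 2 + g t ^ 2) :=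
        integral_congr_Ioo_of_le (by norm_num) fun t ht => by rw [(hd t ht).deriv]
    _ = (∫ t in (-1 : ℝ)..1, (1 - t ^ 2) * φ t ^ 2) + ∫ t in (-1 : ℝ)..1, g t ^ 2 :=
        integral_add (ContinuousOn.intervalIntegrable_of_Icc (by norm_num) (by fun_prop))
          (ContinuousOn.intervalIntegrable_of_Icc (by norm_num) (by fun_prop))
    _ ≥ 3 * ∫ t in (-1 : ℝ)..1, g t ^ 2 := by
        linarith [two_mul_integral_sq_le_integral_weight_mul_sq hgc hφ hd hg0]
end

section
/- For all positive integers m ≥ n, with k = √((m² − n²)/(m² + 2mn)), the following identity holds: √2·π·∫₀^{2π} (m² + 2mn + n² − (m² − n²)cos 2x)/√(m² + 4mn + n² − (m² − n²)cos 2x) dx = 8π·(√(m² + 2mn)·E(k) − (mn/√(m² + 2mn))·K(k)). (This computes the area of the torus M_{m,n} = φ_{m,n}(ℝ²) ⊂ S⁵ in terms of complete elliptic integrals.) -/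
open Real

/-- The complete elliptic integral of the first kind,
`K(k) = ∫₀¹ dx/(√(1−x²)·√(1−k²x²))`. -/
noncomputable def ellK (k : ℝ) : ℝ :=
  ∫ x in (0 : ℝ)..1, 1 / (Real.sqrt (1 - x ^ 2) * Real.sqrt (1 - k ^ 2 * x ^ 2))

/-- The complete elliptic integral of the second kind,
`E(k) = ∫₀¹ √(1−k²x²)/√(1−x²) dx`. -/
noncomputable def ellE (k : ℝ) : ℝ :=
  ∫ x in (0 : ℝ)..1, Real.sqrt (1 - k ^ 2 * x ^ 2) / Real.sqrt (1 - x ^ 2)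

/-!
Put `A = m² + 2mn` and `k² = (m² − n²)/A`. By the double-angle formula the radicand is
`2A(1 − k² cos² x)` and the numerator is `2(A(1 − k² cos² x) − mn)`, so the integrand equals
`√2/√A · (A·√(1 − k² cos² x) − mn/√(1 − k² cos² x))`. This function has period `π` and is
symmetric about `π/2`, so its integral over `[0, 2π]` is four times the integral over `[0, π/2]`,
and the substitution `t = cos x` identifies the two quarter-period integrals with `E(k)` and `K(k)`.
-/

open Set MeasureTheory intervalIntegral

variable {E : Type*} [NormedAddCommGroup E] [NormedSpace ℝ E]

theorem cos_image_Ioo_zero_pi_div_two : cos '' Ioo 0 (π / 2) = Ioo 0 1 := by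
  ext y
  constructor
  · rintro ⟨x, hx, rfl⟩
    refine ⟨cos_pos_of_mem_Ioo ⟨by linarith [hx.1, pi_pos], hx.2⟩, ?_⟩
    simpa using strictAntiOn_cos (left_mem_Icc.2 pi_pos.le)
      ⟨hx.1.le, by linarith [hx.2, pi_pos]⟩ hx.1
  · rintro ⟨h0, h1⟩
    exact ⟨arccos y, ⟨arccos_pos.2 h1, arccos_lt_pi_div_two.2 h0⟩, cos_arccos (by linarith) h1.le⟩

theorem integral_zero_one_eq_integral_sin_smul_comp_cos (f : ℝ → E) :
    ∫ t in (0 : ℝ)..1, f t = ∫ x in (0 : ℝ)..π / 2, sin x • f (cos x) := by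
  have hIoo : Ioo 0 (π / 2) ⊆ Icc 0 π :=
    Ioo_subset_Icc_self.trans (Icc_subset_Icc_right (by linarith [pi_pos]))
  rw [integral_of_le zero_le_one, integral_of_le (by positivity), integral_Ioc_eq_integral_Ioo,
    integral_Ioc_eq_integral_Ioo, ← cos_image_Ioo_zero_pi_div_two,
    integral_image_eq_integral_abs_deriv_smul measurableSet_Ioo
      (fun x _ => (hasDerivAt_cos x).hasDerivWithinAt) (injOn_cos.mono hIoo)]
  refine setIntegral_congr_fun measurableSet_Ioo fun x hx => ?_
  rw [abs_neg, abs_of_nonneg (sin_nonneg_of_nonneg_of_le_pi (hIoo hx).1 (hIoo hx).2)]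

theorem ellE_eq_integral_cos (k : ℝ) :
    ellE k = ∫ x in (0 : ℝ)..π / 2, √(1 - k ^ 2 * cos x ^ 2) := by
  rw [ellE, integral_zero_one_eq_integral_sin_smul_comp_cos]
  refine integral_congr_ae (.of_forall fun x hx => ?_)
  rw [uIoc_of_le (by positivity)] at hx
  have hxπ : x < π := by linarith [hx.2, pi_pos]
  have hsin : sin x ≠ 0 := (sin_pos_of_pos_of_lt_pi hx.1 hxπ).ne'
  rw [smul_eq_mul, ← sin_eq_sqrt_one_sub_cos_sq hx.1.le hxπ.le, mul_div_cancel₀ _ hsin]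

theorem ellK_eq_integral_cos (k : ℝ) :
    ellK k = ∫ x in (0 : ℝ)..π / 2, (√(1 - k ^ 2 * cos x ^ 2))⁻¹ := by
  rw [ellK, integral_zero_one_eq_integral_sin_smul_comp_cos]
  refine integral_congr_ae (.of_forall fun x hx => ?_)
  rw [uIoc_of_le (by positivity)] at hx
  have hxπ : x < π := by linarith [hx.2, pi_pos]
  have hsin : sin x ≠ 0 := (sin_pos_of_pos_of_lt_pi hx.1 hxπ).ne'
  rw [smul_eq_mul, ← sin_eq_sqrt_one_sub_cos_sq hx.1.le hxπ.le, one_div, mul_inv, ← mul_assoc,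
    mul_inv_cancel₀ hsin, one_mul]

theorem integral_zero_two_pi_eq_four_smul {f : ℝ → E} (hf : Continuous f)
    (hper : Function.Periodic f π) (hsymm : ∀ x, f (π - x) = f x) :
    ∫ x in (0 : ℝ)..2 * π, f x = (4 : ℝ) • ∫ x in (0 : ℝ)..π / 2, f x := by
  have hfull : ∫ x in (0 : ℝ)..2 * π, f x = (2 : ℝ) • ∫ x in (0 : ℝ)..π, f x := by
    have := hper.intervalIntegral_add_zsmul_eq 2 0 fun _ _ => hf.intervalIntegrable _ _
    rw [zero_add, zero_add, two_zsmul, ← two_mul] at this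
    rw [this, two_zsmul, two_smul]
  have hreflect : ∫ x in π / 2..π, f x = ∫ x in (0 : ℝ)..π / 2, f x := by
    simpa [hsymm, show π - π / 2 = π / 2 by ring] using
      (integral_comp_sub_left (a := 0) (b := π / 2) f π).symm
  rw [hfull, ← integral_add_adjacent_intervals (b := π / 2) (hf.intervalIntegrable _ _)
    (hf.intervalIntegrable _ _), hreflect, ← two_smul ℝ, smul_smul]
  norm_num

theorem one_sub_sq_mul_cos_sq_pos {k : ℝ} (hk : k ^ 2 < 1) (x : ℝ) :
    0 < 1 - k ^ 2 * cos x ^ 2 := by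
  nlinarith [cos_sq_le_one x, sq_nonneg k]

theorem integral_zero_two_pi_mul_sqrt_sub_div_sqrt {k : ℝ} (hk : k ^ 2 < 1) (a b : ℝ) :
    ∫ x in (0 : ℝ)..2 * π, (a * √(1 - k ^ 2 * cos x ^ 2) - b / √(1 - k ^ 2 * cos x ^ 2)) =
      4 * (a * ellE k - b * ellK k) := by
  have hne : ∀ x, √(1 - k ^ 2 * cos x ^ 2) ≠ 0 := fun x =>
    (sqrt_pos.2 (one_sub_sq_mul_cos_sq_pos hk x)).ne'
  have hsqrt : Continuous fun x => √(1 - k ^ 2 * cos x ^ 2) := by fun_prop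
  have hinv : Continuous fun x => (√(1 - k ^ 2 * cos x ^ 2))⁻¹ := hsqrt.inv₀ hne
  simp_rw [div_eq_mul_inv b]
  rw [integral_zero_two_pi_eq_four_smul (by fun_prop) (fun x => by simp [cos_add_pi])
      (fun x => by simp [cos_pi_sub]),
    integral_sub ((hsqrt.const_mul a).intervalIntegrable _ _)
      ((hinv.const_mul b).intervalIntegrable _ _),
    intervalIntegral.integral_const_mul, intervalIntegral.integral_const_mul,
    ellE_eq_integral_cos, ellK_eq_integral_cos, smul_eq_mul]

theorem area_integrand_eq {M N k x : ℝ} (hA : 0 < M ^ 2 + 2 * M * N)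
    (hk : (M ^ 2 + 2 * M * N) * k ^ 2 = M ^ 2 - N ^ 2) (hw : 0 < 1 - k ^ 2 * cos x ^ 2) :
    (M ^ 2 + 2 * M * N + N ^ 2 - (M ^ 2 - N ^ 2) * cos (2 * x)) /
        √(M ^ 2 + 4 * M * N + N ^ 2 - (M ^ 2 - N ^ 2) * cos (2 * x)) =
      √2 / √(M ^ 2 + 2 * M * N) *
        ((M ^ 2 + 2 * M * N) * √(1 - k ^ 2 * cos x ^ 2) - M * N / √(1 - k ^ 2 * cos x ^ 2)) := by
  have hnum : M ^ 2 + 2 * M * N + N ^ 2 - (M ^ 2 - N ^ 2) * cos (2 * x) =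
      2 * ((M ^ 2 + 2 * M * N) * (1 - k ^ 2 * cos x ^ 2) - M * N) := by
    rw [cos_two_mul]; linear_combination (2 * cos x ^ 2) * hk
  have hden : M ^ 2 + 4 * M * N + N ^ 2 - (M ^ 2 - N ^ 2) * cos (2 * x) =
      2 * ((M ^ 2 + 2 * M * N) * (1 - k ^ 2 * cos x ^ 2)) := by
    rw [cos_two_mul]; linear_combination (2 * cos x ^ 2) * hk
  rw [hnum, hden, sqrt_mul zero_le_two, sqrt_mul hA.le]
  generalize M ^ 2 + 2 * M * N = A at hA ⊢
  generalize 1 - k ^ 2 * cos x ^ 2 = w at hw ⊢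
  have h2 : √2 ^ 2 = 2 := sq_sqrt zero_le_two
  have hw' : √w ^ 2 = w := sq_sqrt hw.le
  have : 0 < √A := sqrt_pos.2 hA
  have : 0 < √w := sqrt_pos.2 hw
  field_simp
  rw [h2, hw']

theorem area_integral_eq_elliptic {M N : ℝ} (hN : 0 < N) (hNM : N ≤ M) :
    √2 * π * ∫ x in (0 : ℝ)..2 * π,
        (M ^ 2 + 2 * M * N + N ^ 2 - (M ^ 2 - N ^ 2) * cos (2 * x)) /
          √(M ^ 2 + 4 * M * N + N ^ 2 - (M ^ 2 - N ^ 2) * cos (2 * x)) =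
      8 * π * (√(M ^ 2 + 2 * M * N) * ellE (√((M ^ 2 - N ^ 2) / (M ^ 2 + 2 * M * N))) -
        M * N / √(M ^ 2 + 2 * M * N) * ellK (√((M ^ 2 - N ^ 2) / (M ^ 2 + 2 * M * N)))) := by
  have hA : 0 < M ^ 2 + 2 * M * N := by nlinarith
  set k := √((M ^ 2 - N ^ 2) / (M ^ 2 + 2 * M * N))
  have hk_sq : k ^ 2 = (M ^ 2 - N ^ 2) / (M ^ 2 + 2 * M * N) :=
    sq_sqrt (div_nonneg (by nlinarith) hA.le)
  have hk : (M ^ 2 + 2 * M * N) * k ^ 2 = M ^ 2 - N ^ 2 := by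
    rw [hk_sq, mul_div_cancel₀ _ hA.ne']
  have hk1 : k ^ 2 < 1 := by
    rw [hk_sq, div_lt_one hA]; nlinarith
  rw [integral_congr fun x _ => area_integrand_eq hA hk (one_sub_sq_mul_cos_sq_pos hk1 x),
    intervalIntegral.integral_const_mul, integral_zero_two_pi_mul_sqrt_sub_div_sqrt hk1]
  have h2 : √2 ^ 2 = 2 := sq_sqrt zero_le_two
  have : 0 < √(M ^ 2 + 2 * M * N) := sqrt_pos.2 hA
  field_simp
  rw [h2, sq_sqrt (by nlinarith)]
  ring

/-- The area of the torus `M_{m,n} ⊂ S⁵` in terms of complete elliptic integrals: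
`√2·π·∫₀^{2π} (m² + 2mn + n² − (m² − n²)cos 2x)/√(m² + 4mn + n² − (m² − n²)cos 2x) dx
 = 8π·(√(m² + 2mn)·E(k) − (mn/√(m² + 2mn))·K(k))` with `k = √((m² − n²)/(m² + 2mn))`. -/
theorem volume_MN_elliptic (m n : ℕ) (hn : 0 < n) (hmn : n ≤ m) :
    Real.sqrt 2 * Real.pi *
      ∫ x in (0 : ℝ)..(2 * Real.pi),
        ((m : ℝ) ^ 2 + 2 * m * n + n ^ 2 - ((m : ℝ) ^ 2 - n ^ 2) * Real.cos (2 * x)) /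
          Real.sqrt ((m : ℝ) ^ 2 + 4 * m * n + n ^ 2 -
            ((m : ℝ) ^ 2 - n ^ 2) * Real.cos (2 * x)) =
    8 * Real.pi *
      (Real.sqrt ((m : ℝ) ^ 2 + 2 * m * n) *
          ellE (Real.sqrt (((m : ℝ) ^ 2 - n ^ 2) / ((m : ℝ) ^ 2 + 2 * m * n))) -
        (m : ℝ) * n / Real.sqrt ((m : ℝ) ^ 2 + 2 * m * n) *
          ellK (Real.sqrt (((m : ℝ) ^ 2 - n ^ 2) / ((m : ℝ) ^ 2 + 2 * m * n)))) :=
  area_integral_eq_elliptic (Nat.cast_pos.2 hn) (Nat.cast_le.2 hmn)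
end

section
/- For every real k with 0 ≤ k < 1, one has K(k) − (2/(2 − k²))·E(k) ≥ 0. -/
open Real

open Set MeasureTheory intervalIntegral in
private lemma ell_base_int {a : ℝ} (ha : 0 ≤ a) (ha1 : a ≤ 1) :
    IntervalIntegrable (fun x : ℝ => 1 / Real.sqrt (1 - x ^ 2)) volume a 1 := by
  apply intervalIntegrable_deriv_of_nonneg (g := Real.arcsin)
  · exact Real.continuous_arcsin.continuousOn
  · intro x hx
    rw [min_eq_left ha1, max_eq_right ha1] at hx
    exact Real.hasDerivAt_arcsin (by nlinarith [hx.1, hx.2]) (ne_of_lt hx.2)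
  · intro x _; positivity

open Set MeasureTheory intervalIntegral in
private lemma ell_int_of_bound {a : ℝ} (ha : 0 ≤ a) (ha1 : a ≤ 1) {h : ℝ → ℝ} (C : ℝ)
    (hm : AEStronglyMeasurable h (volume.restrict (Set.uIoc a 1)))
    (hb : ∀ x ∈ Set.Ioc a 1, |h x| ≤ C * (1 / Real.sqrt (1 - x ^ 2))) :
    IntervalIntegrable h volume a 1 := by
  apply ((ell_base_int ha ha1).const_mul C).mono_fun hm
  filter_upwards [ae_restrict_mem measurableSet_uIoc] with x hx
  rw [Set.uIoc_of_le ha1] at hx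
  rw [Real.norm_eq_abs, Real.norm_eq_abs]
  exact (hb x hx).trans (le_abs_self _)

set_option maxHeartbeats 1600000 in
/-- For every real `k` with `0 ≤ k < 1`, one has `K(k) − (2/(2 − k²))·E(k) ≥ 0`. -/
theorem ellK_sub_ellE_nonneg (k : ℝ) (hk0 : 0 ≤ k) (hk1 : k < 1) :
    0 ≤ ellK k - 2 / (2 - k ^ 2) * ellE k := by
  classical
  open Set MeasureTheory intervalIntegral in
  set c : ℝ := 2 / (2 - k ^ 2) with hc
  have hk2 : k ^ 2 < 1 := by nlinarith
  have h2k : (0:ℝ) < 2 - k ^ 2 := by nlinarith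
  have hc_pos : 0 < c := by positivity
  have hsk : (0:ℝ) < Real.sqrt (1 - k ^ 2) := Real.sqrt_pos.mpr (by linarith)
  set f : ℝ → ℝ := fun x => 1 / (Real.sqrt (1 - x ^ 2) * Real.sqrt (1 - k ^ 2 * x ^ 2)) with hf
  set g : ℝ → ℝ := fun x => Real.sqrt (1 - k ^ 2 * x ^ 2) / Real.sqrt (1 - x ^ 2) with hg
  set p : ℝ → ℝ := fun x =>
    (x ^ 2 - 1/2) / (Real.sqrt (1 - x ^ 2) * Real.sqrt (1 - k ^ 2 * x ^ 2)) with hp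
  have hK : ellK k = ∫ x in (0:ℝ)..1, f x := rfl
  have hE : ellE k = ∫ x in (0:ℝ)..1, g x := rfl
  clear_value c f g p
  have hBpos : ∀ x : ℝ, x ∈ Set.Icc (0:ℝ) 1 →
      Real.sqrt (1 - k^2) ≤ Real.sqrt (1 - k ^ 2 * x ^ 2) := by
    intro x hx
    apply Real.sqrt_le_sqrt
    have hx2 : x ^ 2 ≤ 1 := by nlinarith [hx.1, hx.2]
    nlinarith [sq_nonneg k]
  have hBpos' : ∀ x : ℝ, x ∈ Set.Icc (0:ℝ) 1 → 0 < Real.sqrt (1 - k ^ 2 * x ^ 2) := by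
    intro x hx; exact lt_of_lt_of_le hsk (hBpos x hx)
  -- integrability of f
  have hf_int : IntervalIntegrable f volume 0 1 := by
    apply ell_int_of_bound le_rfl zero_le_one (1 / Real.sqrt (1 - k^2))
    · apply Measurable.aestronglyMeasurable
      simp only [hf]; fun_prop
    · intro x hx
      have hxI : x ∈ Set.Icc (0:ℝ) 1 := ⟨hx.1.le, hx.2⟩
      have hB := hBpos x hxI
      simp only [hf]
      rw [abs_of_nonneg (by positivity)]
      rw [show (1:ℝ) / (Real.sqrt (1 - x ^ 2) * Real.sqrt (1 - k ^ 2 * x ^ 2))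
          = (1 / Real.sqrt (1 - k ^ 2 * x ^ 2)) * (1 / Real.sqrt (1 - x ^ 2)) by ring]
      exact mul_le_mul_of_nonneg_right (one_div_le_one_div_of_le hsk hB) (by positivity)
  -- integrability of g
  have hg_int : IntervalIntegrable g volume 0 1 := by
    apply ell_int_of_bound le_rfl zero_le_one 1
    · apply Measurable.aestronglyMeasurable
      simp only [hg]; fun_prop
    · intro x hx
      have hB1 : Real.sqrt (1 - k ^ 2 * x ^ 2) ≤ 1 :=
        Real.sqrt_le_one.mpr (by nlinarith [sq_nonneg (k*x)])
      simp only [hg]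
      rw [abs_of_nonneg (by positivity), div_eq_mul_one_div]
      exact mul_le_mul_of_nonneg_right hB1 (by positivity)
  -- integrability of p
  have hp_int' : ∀ a : ℝ, 0 ≤ a → a ≤ 1 → IntervalIntegrable p volume a 1 := by
    intro a ha ha1
    apply ell_int_of_bound ha ha1 (1 / Real.sqrt (1 - k^2))
    · apply Measurable.aestronglyMeasurable
      simp only [hp]; fun_prop
    · intro x hx
      have hxI : x ∈ Set.Icc (0:ℝ) 1 := ⟨le_trans ha hx.1.le, hx.2⟩
      have hB := hBpos x hxI
      have hnum : |x ^ 2 - 1/2| ≤ 1 := by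
        rw [abs_le]; constructor <;> nlinarith [hxI.1, hxI.2]
      simp only [hp]
      rw [abs_div, abs_of_nonneg (by positivity :
        (0:ℝ) ≤ Real.sqrt (1 - x ^ 2) * Real.sqrt (1 - k ^ 2 * x ^ 2))]
      calc |x ^ 2 - 1/2| / (Real.sqrt (1 - x ^ 2) * Real.sqrt (1 - k ^ 2 * x ^ 2))
          ≤ 1 / (Real.sqrt (1 - x ^ 2) * Real.sqrt (1 - k ^ 2 * x ^ 2)) :=
            div_le_div_of_nonneg_right hnum (by positivity)
        _ ≤ 1 / Real.sqrt (1 - k^2) * (1 / Real.sqrt (1 - x ^ 2)) := by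
            rw [show (1:ℝ) / (Real.sqrt (1 - x ^ 2) * Real.sqrt (1 - k ^ 2 * x ^ 2))
              = (1 / Real.sqrt (1 - k ^ 2 * x ^ 2)) * (1 / Real.sqrt (1 - x ^ 2)) by ring]
            exact mul_le_mul_of_nonneg_right (one_div_le_one_div_of_le hsk hB) (by positivity)
  have hp_int : IntervalIntegrable p volume 0 1 := hp_int' 0 le_rfl zero_le_one
  -- step 1: express the difference as c * k^2 * ∫ p
  have key : ellK k - c * ellE k = c * k ^ 2 * ∫ x in (0:ℝ)..1, p x := by
    have h1 : ellK k - c * ellE k = ∫ x in (0:ℝ)..1, (f x - c * g x) := by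
      rw [intervalIntegral.integral_sub hf_int (hg_int.const_mul c),
        intervalIntegral.integral_const_mul, hK, hE]
    rw [h1, ← intervalIntegral.integral_const_mul]
    apply intervalIntegral.integral_congr
    intro x hx
    rw [Set.uIcc_of_le zero_le_one] at hx
    have hB' := hBpos' x hx
    rcases eq_or_lt_of_le (Real.sqrt_nonneg (1 - x ^ 2)) with hA0 | hA0
    · simp only [hf, hg, hp, ← hA0, zero_mul, div_zero, mul_zero, sub_zero, div_zero]
    · have hA2 : Real.sqrt (1 - x ^ 2) ^ 2 = 1 - x ^ 2 := by
        apply Real.sq_sqrt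
        nlinarith [Real.sqrt_nonneg (1 - x^2), Real.sqrt_eq_zero' (x := 1 - x^2), hx.1, hx.2]
      have hB2 : Real.sqrt (1 - k ^ 2 * x ^ 2) ^ 2 = 1 - k ^ 2 * x ^ 2 :=
        Real.sq_sqrt (by nlinarith [hx.1, hx.2, sq_nonneg (k*x)])
      simp only [hf, hg, hp]
      have hgq : Real.sqrt (1 - k ^ 2 * x ^ 2) / Real.sqrt (1 - x ^ 2)
          = (1 - k ^ 2 * x ^ 2) / (Real.sqrt (1 - x ^ 2) * Real.sqrt (1 - k ^ 2 * x ^ 2)) := by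
        rw [div_eq_div_iff hA0.ne' (by positivity)]
        linear_combination Real.sqrt (1 - x ^ 2) * hB2
      rw [hgq, ← mul_div_assoc, div_sub_div_same]
      have hnum2 : 1 - c * (1 - k ^ 2 * x ^ 2) = c * k ^ 2 * (x ^ 2 - 1/2) := by
        rw [hc]; field_simp; ring
      rw [hnum2, mul_div_assoc]
  -- step 2: the integral of p is nonnegative
  have hI : 0 ≤ ∫ x in (0:ℝ)..1, p x := by
    set s : ℝ := Real.sqrt (1/2) with hs
    have hs2 : s ^ 2 = 1/2 := Real.sq_sqrt (by norm_num)
    have hs_pos : 0 < s := Real.sqrt_pos.mpr (by norm_num)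
    clear_value s
    have hs_nonneg : 0 ≤ s := hs_pos.le
    have hs1 : s < 1 := by nlinarith
    have pcont : ContinuousOn p (Set.Icc 0 s) := by
      rw [hp]
      apply ContinuousOn.div
      · fun_prop
      · fun_prop
      · intro x hx
        have hx1 : x < 1 := lt_of_le_of_lt hx.2 hs1
        have hA : 0 < Real.sqrt (1 - x^2) := Real.sqrt_pos.mpr (by nlinarith [hx.1])
        have hB := hBpos' x ⟨hx.1, hx1.le⟩
        exact (mul_pos hA hB).ne'
    have himg : ∀ u : ℝ, u ∈ Set.Icc s 1 → Real.sqrt (1 - u^2) ∈ Set.Icc 0 s := by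
      intro u hu
      refine ⟨Real.sqrt_nonneg _, ?_⟩
      rw [hs]
      apply Real.sqrt_le_sqrt
      nlinarith [hu.1, hu.2]
    set q0 : ℝ → ℝ := fun u => (-u / Real.sqrt (1 - u^2)) * p (Real.sqrt (1 - u^2)) with hq0
    clear_value q0
    -- integrability of q0 on [s,1]
    have hq0_int : IntervalIntegrable q0 volume s 1 := by
      apply ell_int_of_bound hs_nonneg hs1.le (1/2 / (s * Real.sqrt (1 - k^2)))
      · apply Measurable.aestronglyMeasurable
        simp only [hq0, hp]
        fun_prop
      · intro u hu
        simp only [hq0]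
        set y := Real.sqrt (1 - u^2) with hy_def
        have hy : y ∈ Set.Icc 0 s := by rw [hy_def]; exact himg u ⟨hu.1.le, hu.2⟩
        clear_value y
        have hy1 : y < 1 := lt_of_le_of_lt hy.2 hs1
        have hAy : s ≤ Real.sqrt (1 - y^2) := by
          rw [hs]
          apply Real.sqrt_le_sqrt
          nlinarith [hy.1, hy.2, hs2]
        have hBy := hBpos y ⟨hy.1, hy1.le⟩
        have hApos : 0 < Real.sqrt (1 - y ^ 2) := lt_of_lt_of_le hs_pos hAy
        have hBypos := hBpos' y ⟨hy.1, hy1.le⟩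
        have hpy : |p y| ≤ 1/2 / (s * Real.sqrt (1 - k^2)) := by
          simp only [hp]
          rw [abs_div, abs_of_nonneg (by positivity :
            (0:ℝ) ≤ Real.sqrt (1 - y ^ 2) * Real.sqrt (1 - k ^ 2 * y ^ 2))]
          apply div_le_div₀ (by norm_num)
          · rw [abs_le]; constructor <;> nlinarith [hy.1, hy.2, hs2]
          · positivity
          · exact mul_le_mul hAy hBy hsk.le (by positivity)
        rw [abs_mul]
        have h1 : |(-u) / y| ≤ 1 / y := by
          rw [abs_div, abs_neg, abs_of_nonneg (le_trans hs_nonneg hu.1.le),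
            abs_of_nonneg hy.1]
          exact div_le_div_of_nonneg_right hu.2 hy.1
        calc |(-u) / y| * |p y|
            ≤ (1 / y) * (1/2 / (s * Real.sqrt (1 - k^2))) :=
              mul_le_mul h1 hpy (abs_nonneg _) (one_div_nonneg.mpr hy.1)
          _ = 1/2 / (s * Real.sqrt (1 - k^2)) * (1 / y) := by ring
    -- the substitution u ↦ √(1-u²) on [s,1]
    have hsub : (∫ u in s..1, (-u / Real.sqrt (1 - u^2)) •
          ((p ∘ (fun v => Real.sqrt (1 - v^2))) u))
        = ∫ x in (Real.sqrt (1 - s^2))..(Real.sqrt (1 - (1:ℝ)^2)), p x := by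
      apply intervalIntegral.integral_comp_smul_deriv'''
      · fun_prop
      · intro x hx
        rw [min_eq_left hs1.le, max_eq_right hs1.le] at hx
        have hx0 : 0 < x := lt_trans hs_pos hx.1
        have hx2 : (0:ℝ) < 1 - x^2 := by nlinarith [hx.2]
        have h1 : HasDerivAt (fun u : ℝ => 1 - u^2) (-(2*x)) x := by
          simpa using ((hasDerivAt_pow 2 x).const_sub 1)
        have h2 := h1.sqrt hx2.ne'
        have h3 : -(2*x) / (2 * Real.sqrt (1 - x^2)) = -x / Real.sqrt (1 - x^2) := by
          have hne : Real.sqrt (1 - x^2) ≠ 0 := (Real.sqrt_pos.mpr hx2).ne'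
          field_simp
        rw [h3] at h2
        exact h2.hasDerivWithinAt
      · rw [min_eq_left hs1.le, max_eq_right hs1.le]
        apply pcont.mono
        rintro _ ⟨u, hu, rfl⟩
        exact himg u ⟨hu.1.le, hu.2.le⟩
      · apply (pcont.integrableOn_Icc).mono_set
        rintro _ ⟨u, hu, rfl⟩
        rw [Set.uIcc_of_le hs1.le] at hu
        exact himg u hu
      · rw [← intervalIntegrable_iff' (μ := volume) (a := s) (b := 1)]
        have heq : (fun x => (-x / Real.sqrt (1 - x^2)) •
            ((p ∘ (fun v => Real.sqrt (1 - v^2))) x)) = q0 := by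
          funext u
          simp only [hq0]
          simp [smul_eq_mul, Function.comp]
        rw [heq]
        exact hq0_int
    have hfs : Real.sqrt (1 - s^2) = s := by rw [hs2, hs]; norm_num
    have hf1 : Real.sqrt (1 - (1:ℝ)^2) = 0 := by norm_num
    rw [hfs, hf1] at hsub
    have hps : IntervalIntegrable p volume s 1 := hp_int' s hs_nonneg hs1.le
    have h0s : (∫ x in (0:ℝ)..s, p x) = ∫ u in s..1, -(q0 u) := by
      rw [intervalIntegral.integral_neg]
      have h01 : (∫ u in s..1, q0 u) = ∫ x in s..(0:ℝ), p x := by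
        rw [← hsub]
        apply intervalIntegral.integral_congr
        intro u _
        simp only [hq0]
        simp [smul_eq_mul, Function.comp]
      rw [h01, intervalIntegral.integral_symm]
    have hsubset : Set.uIcc (0:ℝ) s ⊆ Set.uIcc (0:ℝ) 1 := by
      rw [Set.uIcc_of_le hs_nonneg, Set.uIcc_of_le zero_le_one]
      exact Set.Icc_subset_Icc le_rfl hs1.le
    have hsplit := (intervalIntegral.integral_add_adjacent_intervals
      (hp_int.mono_set hsubset) hps).symm
    have hnq : IntervalIntegrable (fun u => -(q0 u)) volume s 1 := hq0_int.neg
    have hadd := intervalIntegral.integral_add hnq hps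
    rw [hsplit, h0s, ← hadd]
    apply intervalIntegral.integral_nonneg hs1.le
    intro u hu
    simp only [hq0, hp]
    rcases eq_or_lt_of_le (Real.sqrt_nonneg (1 - u ^ 2)) with hA0 | hA0
    · rw [← hA0]
      simp
    · have h1u2 : (0:ℝ) < 1 - u^2 := Real.sqrt_pos.mp hA0
      have hu0 : 0 < u := lt_of_lt_of_le hs_pos hu.1
      have hu1 : u < 1 := by nlinarith
      set y := Real.sqrt (1 - u^2) with hy_def
      have hy2 : y ^ 2 = 1 - u ^ 2 := by rw [hy_def]; exact Real.sq_sqrt h1u2.le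
      have hy : y ∈ Set.Icc 0 s := by rw [hy_def]; exact himg u ⟨hu.1, hu.2⟩
      clear_value y
      have h1y : 1 - y ^ 2 = u ^ 2 := by linarith
      have hAy : Real.sqrt (1 - y ^ 2) = u := by rw [h1y]; exact Real.sqrt_sq hu0.le
      have hD_pos : 0 < Real.sqrt (1 - k^2 * y^2) :=
        hBpos' y ⟨hy.1, le_trans hy.2 hs1.le⟩
      have hB_pos : 0 < Real.sqrt (1 - k^2 * u^2) := hBpos' u ⟨hu0.le, hu.2⟩
      have h2u : (0:ℝ) ≤ 2*u^2 - 1 := by nlinarith [hu.1, hs2, hs_nonneg]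
      have hBD : Real.sqrt (1 - k^2 * u^2) ≤ Real.sqrt (1 - k^2 * y^2) := by
        apply Real.sqrt_le_sqrt
        nlinarith [mul_nonneg (sq_nonneg k) h2u, hy2]
      have hA0' : 0 < y := by rw [hy_def] at hA0 ⊢; exact hA0
      rw [hAy]
      set D := Real.sqrt (1 - k ^ 2 * y ^ 2) with hD_def
      clear_value D
      rw [hD_def] at hD_pos hBD
      rw [← hD_def] at hD_pos hBD
      have hval : -u / y * ((y ^ 2 - 1/2) / (u * D)) = (u^2 - 1/2) / (y * D) := by
        rw [hy2]
        field_simp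
        ring
      rw [hval, neg_add_eq_sub, sub_nonneg]
      apply div_le_div_of_nonneg_left (by nlinarith [h2u]) (mul_pos hA0' hB_pos)
      exact mul_le_mul_of_nonneg_left hBD hA0'.le
  rw [hc] at key ⊢
  rw [key]
  positivity
end

section
/- For every real m ≥ 7 and every real x with 0 < x ≤ 1, the inequality √(1 + 2x)·(1 − 2x/(1 + 4x + x²))·E(√((1 − x²)/(1 + 2x))) ≤ 2(1 + x) − 3/m holds. -/
open Real MeasureTheory

lemma hasDerivAt_arcsin' : ∀ t ∈ Set.Ioo (0:ℝ) 1,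
    HasDerivAt Real.arcsin (1 / Real.sqrt (1 - t ^ 2)) t := by
  intro t ht
  exact Real.hasDerivAt_arcsin (by nlinarith [ht.1, ht.2]) (ne_of_lt ht.2)

lemma intg_one_div : IntervalIntegrable (fun t : ℝ => 1 / Real.sqrt (1 - t ^ 2)) volume 0 1 := by
  apply intervalIntegral.intervalIntegrable_deriv_of_nonneg (g := Real.arcsin)
  · exact Real.continuous_arcsin.continuousOn
  · simpa using hasDerivAt_arcsin'
  · intro t ht
    positivity

lemma integral_one_div_sqrt : (∫ t in (0:ℝ)..1, 1 / Real.sqrt (1 - t ^ 2)) = π / 2 := by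
  rw [intervalIntegral.integral_eq_sub_of_hasDeriv_right_of_le (by norm_num)
      Real.continuous_arcsin.continuousOn
      (fun t ht => (hasDerivAt_arcsin' t ht).hasDerivWithinAt) intg_one_div]
  simp [Real.arcsin_one]

lemma ellE_le (k : ℝ) : ellE k ≤ π / 2 := by
  rw [ellE]
  by_cases h : IntervalIntegrable
      (fun t : ℝ => Real.sqrt (1 - k ^ 2 * t ^ 2) / Real.sqrt (1 - t ^ 2)) volume 0 1
  · rw [← integral_one_div_sqrt]
    apply intervalIntegral.integral_mono_on (by norm_num) h intg_one_div
    intro t ht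
    have h1 : Real.sqrt (1 - k ^ 2 * t ^ 2) ≤ 1 := Real.sqrt_le_one.mpr (by nlinarith)
    rcases eq_or_lt_of_le (Real.sqrt_nonneg (1 - t ^ 2)) with h2 | h2
    · simp [← h2]
    · exact (div_le_div_iff_of_pos_right h2).mpr h1
  · rw [intervalIntegral.integral_undef h]
    positivity

/-- For every real `m ≥ 7` and every real `x` with `0 < x ≤ 1`,
`√(1 + 2x)·(1 − 2x/(1 + 4x + x²))·E(√((1 − x²)/(1 + 2x))) ≤ 2(1 + x) − 3/m`. -/
theorem normalized_area_inequality (m x : ℝ) (hm : 7 ≤ m) (hx0 : 0 < x) (hx1 : x ≤ 1) :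
    Real.sqrt (1 + 2 * x) * (1 - 2 * x / (1 + 4 * x + x ^ 2)) *
        ellE (Real.sqrt ((1 - x ^ 2) / (1 + 2 * x))) ≤ 2 * (1 + x) - 3 / m := by
  have hE := ellE_le (Real.sqrt ((1 - x ^ 2) / (1 + 2 * x)))
  have hd : (0:ℝ) < 1 + 4 * x + x ^ 2 := by nlinarith
  have hf : (0:ℝ) ≤ 1 - 2 * x / (1 + 4 * x + x ^ 2) := by
    rw [sub_nonneg, div_le_one hd]; nlinarith
  have hs : Real.sqrt (1 + 2 * x) ≤ 1 + x := by
    rw [show (1:ℝ) + x = Real.sqrt ((1 + x) ^ 2) from (Real.sqrt_sq (by positivity)).symm]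
    exact Real.sqrt_le_sqrt (by nlinarith)
  have hsn : (0:ℝ) ≤ Real.sqrt (1 + 2 * x) := Real.sqrt_nonneg _
  have hpi : π ≤ 22 / 7 := Real.pi_lt_d6.le.trans (by norm_num)
  have hpi0 : (0:ℝ) < π := Real.pi_pos
  have h3m : 3 / m ≤ 3 / 7 := by
    apply div_le_div_of_nonneg_left (by norm_num) (by norm_num) hm
  calc Real.sqrt (1 + 2 * x) * (1 - 2 * x / (1 + 4 * x + x ^ 2)) *
        ellE (Real.sqrt ((1 - x ^ 2) / (1 + 2 * x)))
      ≤ Real.sqrt (1 + 2 * x) * (1 - 2 * x / (1 + 4 * x + x ^ 2)) * (π / 2) :=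
        mul_le_mul_of_nonneg_left hE (by positivity)
    _ ≤ (1 + x) * (1 - 2 * x / (1 + 4 * x + x ^ 2)) * (π / 2) := by
        apply mul_le_mul_of_nonneg_right _ (by positivity)
        exact mul_le_mul_of_nonneg_right hs hf
    _ = ((1 + x) * (1 + 2 * x + x ^ 2) * (π / 2)) / (1 + 4 * x + x ^ 2) := by
        field_simp; ring
    _ ≤ 2 * (1 + x) - 3 / 7 := by
        rw [div_le_iff₀ hd]
        nlinarith [mul_nonneg (mul_nonneg hx0.le hx0.le) hx0.le,
          mul_nonneg (sub_nonneg.mpr hpi) (by positivity : (0:ℝ) ≤ (1 + x) * (1 + 2 * x + x ^ 2))]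
    _ ≤ 2 * (1 + x) - 3 / m := by linarith
end
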